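/- arXiv:1806.11273 — 4 statements merged into one kernel-verified Lean document; each statement's English description precedes it below -/
import Mathlib

section
/- Every submonoid of ℕ^d (with componentwise addition) is a finite factorization monoid: for every element x of the submonoid, the set of factorizations of x into atoms of the submonoid is finite. -/
/-- `a` is an atom of the additive submonoid `H`: a nonzero element of `H` that cannot be
written as a sum of two nonzero elements of `H`. -/
def IsAtomOf {d : ℕ} (H : AddSubmonoid (Fin d → ℕ)) (a : Fin d → ℕ) : Prop :=
  a ∈ H ∧ a ≠ 0 ∧ ∀ y ∈ H, ∀ z ∈ H, a = y + z → y = 0 ∨ z = 0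

private lemma card_le_sum {d : ℕ} (s : Multiset (Fin d → ℕ)) (h : ∀ a ∈ s, a ≠ 0) :
    Multiset.card s ≤ ∑ i, s.sum i := by
  induction s using Multiset.induction with
  | empty => simp
  | cons a s ih =>
    have ha : a ≠ 0 := h a (Multiset.mem_cons_self a s)
    have h1 : 1 ≤ ∑ i, a i := by
      by_contra hc
      push_neg at hc
      apply ha
      funext i
      have := Finset.sum_eq_zero_iff.mp (Nat.lt_one_iff.mp hc) i (Finset.mem_univ i)
      exact this
    have ihs := ih (fun b hb => h b (Multiset.mem_cons_of_mem hb))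
    simp only [Multiset.card_cons, Multiset.sum_cons, Pi.add_apply, Finset.sum_add_distrib]
    omega

/-- Every submonoid of `ℕ^d` is an FF-monoid: each element has only finitely many
factorizations (multisets of atoms summing to it). -/
theorem stmt0 {d : ℕ} (H : AddSubmonoid (Fin d → ℕ)) (x : Fin d → ℕ) (hx : x ∈ H) :
    {s : Multiset (Fin d → ℕ) | (∀ a ∈ s, IsAtomOf H a) ∧ s.sum = x}.Finite := by
  classical
  set n := ∑ i, x i with hn
  set T : Finset (Fin d → ℕ) := Fintype.piFinset (fun i => Finset.range (x i + 1)) with hT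
  set t : Multiset (Fin d → ℕ) := n • T.val with ht
  apply Set.Finite.subset (t.powerset.toFinset.finite_toSet)
  rintro s ⟨hatom, hsum⟩
  simp only [Finset.coe_sort_coe, Finset.mem_coe, Multiset.mem_toFinset,
    Multiset.mem_powerset]
  rw [Multiset.le_iff_count]
  intro a
  by_cases has : a ∈ s
  · have hle : a ≤ x := by
      rw [← hsum]
      exact Multiset.single_le_sum (fun b _ => by intro i; exact Nat.zero_le _) a has
    have haT : a ∈ T := by
      rw [hT, Fintype.mem_piFinset]
      intro i
      rw [Finset.mem_range]
      exact Nat.lt_succ_of_le (hle i)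
    have hcard : Multiset.card s ≤ n := by
      rw [hn, ← hsum]
      exact card_le_sum s (fun b hb => (hatom b hb).2.1)
    have h1 : Multiset.count a s ≤ n :=
      le_trans (Multiset.count_le_card a s) hcard
    rw [ht, Multiset.count_nsmul]
    have : Multiset.count a T.val = 1 := by
      rw [Multiset.count_eq_one_of_mem T.nodup haT]
    rw [this, mul_one]
    exact h1
  · simp [Multiset.count_eq_zero_of_notMem has]
end

section
/- Let V be a ℚ-linear subspace of ℚ^r. Then the monoid H' = ℕ^r ∩ V is a finitely generated additive monoid. -/
theorem aux_eq_of_le_of_sum_eq {r : ℕ} {y m : Fin r → ℕ} (hle : y ≤ m)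
    (hsum : ∑ i, y i = ∑ i, m i) : y = m := by
  funext i
  by_contra hne
  have hlt : y i < m i := lt_of_le_of_ne (hle i) hne
  have : ∑ i, y i < ∑ i, m i :=
    Finset.sum_lt_sum (fun j _ => hle j) ⟨i, Finset.mem_univ i, hlt⟩
  omega

theorem aux_fg_of_sub_closed (r : ℕ) (H : AddSubmonoid (Fin r → ℕ))
    (hsub : ∀ x y, x ∈ H → y ∈ H → y ≤ x → x - y ∈ H) : H.FG := by
  classical
  set M : Set (Fin r → ℕ) :=
    {m | m ∈ H ∧ m ≠ 0 ∧ ∀ y, y ∈ H → y ≠ 0 → y ≤ m → y = m} with hM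
  have hanti : IsAntichain (· ≤ ·) M := fun a ha b hb hne hle =>
    hne (hb.2.2 a ha.1 ha.2.1 hle)
  have hMfin : M.Finite :=
    hanti.finite_of_partiallyWellOrderedOn (Set.isPWO_of_wellQuasiOrderedLE M)
  -- every nonzero element of H lies above some element of M
  have hmin : ∀ x, x ∈ H → x ≠ 0 → ∃ m ∈ M, m ≤ x := by
    intro x hx hx0
    set T : Set (Fin r → ℕ) := {y | y ∈ H ∧ y ≠ 0 ∧ y ≤ x} with hT
    have hTx : x ∈ T := ⟨hx, hx0, le_refl x⟩
    have hS : (Set.image (fun y => ∑ i, y i) T).Nonempty := ⟨_, x, hTx, rfl⟩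
    obtain ⟨n, ⟨m, hmT, rfl⟩, hnmin⟩ :=
      Nat.lt_wfRel.wf.has_min ((fun y => ∑ i, y i) '' T) ⟨_, x, hTx, rfl⟩
    refine ⟨m, ⟨hmT.1, hmT.2.1, ?_⟩, hmT.2.2⟩
    intro y hy hy0 hym
    have hyT : y ∈ T := ⟨hy, hy0, le_trans hym hmT.2.2⟩
    have h1 : ∑ i, m i ≤ ∑ i, y i := Nat.le_of_not_lt (hnmin _ ⟨y, hyT, rfl⟩)
    have h2 : ∑ i, y i ≤ ∑ i, m i := Finset.sum_le_sum (fun i _ => hym i)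
    exact aux_eq_of_le_of_sum_eq hym (le_antisymm h2 h1)
  refine ⟨hMfin.toFinset, le_antisymm ?_ ?_⟩
  · rw [AddSubmonoid.closure_le]
    intro m hm
    simp only [Set.Finite.coe_toFinset] at hm
    exact hm.1
  · intro x hx
    have key : ∀ n (x : Fin r → ℕ), x ∈ H → (∑ i, x i) = n →
        x ∈ AddSubmonoid.closure (hMfin.toFinset : Set (Fin r → ℕ)) := by
      intro n
      induction n using Nat.strong_induction_on with
      | _ n ih =>
        intro x hx hn
        by_cases hx0 : x = 0
        · subst hx0; exact AddSubmonoid.zero_mem _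
        · obtain ⟨m, hmM, hmx⟩ := hmin x hx hx0
          have hxm : x - m ∈ H := hsub x m hx hmM.1 hmx
          have hm0 : ∑ i, m i ≠ 0 := by
            intro h
            apply hmM.2.1
            funext i
            have := Finset.sum_eq_zero_iff.mp h i (Finset.mem_univ i)
            simpa using this
          have hsum : ∑ i, (x - m) i = n - ∑ i, m i := by
            subst hn
            rw [← Finset.sum_tsub_distrib]
            · rfl
            · exact fun i _ => hmx i
          have hlt : n - ∑ i, m i < n := by
            subst hn
            have : 0 < ∑ i, m i := Nat.pos_of_ne_zero hm0
            have hmle : ∑ i, m i ≤ ∑ i, x i := Finset.sum_le_sum (fun i _ => hmx i)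
            omega
          have hrec := ih _ hlt (x - m) hxm hsum
          have : x = m + (x - m) := by
            funext i
            have h : m i ≤ x i := hmx i
            simp only [Pi.add_apply, Pi.sub_apply]
            omega
          rw [this]
          exact AddSubmonoid.add_mem _
            (AddSubmonoid.subset_closure (by simpa using hmM)) hrec
    exact key _ x hx rfl



/-- Gordan's Lemma consequence: for a `ℚ`-linear subspace `V` of `ℚ^r`, the monoid
`ℕ^r ∩ V` is a finitely generated additive monoid. -/
theorem stmt5 (r : ℕ) (V : Submodule ℚ (Fin r → ℚ)) :
    AddSubmonoid.FG
      { carrier := {x : Fin r → ℕ | (fun i => (x i : ℚ)) ∈ V}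
        zero_mem' := by
          have h : (fun i : Fin r => ((0 : Fin r → ℕ) i : ℚ)) = (0 : Fin r → ℚ) := by
            funext i; simp
          show (fun i => ((0 : Fin r → ℕ) i : ℚ)) ∈ V
          rw [h]
          exact V.zero_mem
        add_mem' := by
          intro a b ha hb
          have heq : (fun i : Fin r => ((a + b) i : ℚ)) =
              (fun i => (a i : ℚ)) + fun i => (b i : ℚ) := by
            funext i; push_cast; simp
          show (fun i => ((a + b) i : ℚ)) ∈ V
          rw [heq]
          exact V.add_mem ha hb } := by
  apply aux_fg_of_sub_closed
  intro x y hx hy hle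
  show (fun i => ((x - y) i : ℚ)) ∈ V
  have heq : (fun i : Fin r => ((x - y) i : ℚ)) =
      (fun i => (x i : ℚ)) - fun i => (y i : ℚ) := by
    funext i
    simp only [Pi.sub_apply]
    rw [Nat.cast_sub (hle i)]
  rw [heq]
  exact V.sub_mem hx hy
end

section
/- Every rank-d submonoid of a free commutative monoid of finite rank is isomorphic (as a monoid) to an additive submonoid of ℕ^d of rank d. -/
/-- The rank of a submonoid `H` of `ℕ^r`: the dimension of the `ℚ`-span of (the image of) `H`
in `ℚ^r`, which coincides with the rank of the Grothendieck group of `H`. -/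
noncomputable def monoidRank {r : ℕ} (H : AddSubmonoid (Fin r → ℕ)) : ℕ :=
  Module.finrank ℚ (Submodule.span ℚ ((fun x : Fin r → ℕ => fun i => (x i : ℚ)) '' H))

/-- Every rank-`d` submonoid of a finite-rank free commutative monoid (i.e. of some `ℕ^r`)
is isomorphic to a rank-`d` additive submonoid of `ℕ^d`. -/
theorem stmt6 (r d : ℕ) (H : AddSubmonoid (Fin r → ℕ)) (hrk : monoidRank H = d) :
    ∃ H' : AddSubmonoid (Fin d → ℕ), Nonempty (H ≃+ H') ∧ monoidRank H' = d := by
  classical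
  set V : Submodule ℚ (Fin r → ℚ) :=
    Submodule.span ℚ ((fun x : Fin r → ℕ => fun i => (x i : ℚ)) '' H) with hV
  have hfin : Module.finrank ℚ V = d := hrk
  -- restricted coordinate functionals
  set g : Fin r → Module.Dual ℚ V := fun i => (LinearMap.proj i).domRestrict V with hg
  have hcoord : (fun i => LinearMap.proj (R := ℚ) (φ := fun _ : Fin r => ℚ) i)
      = ⇑(Pi.basisFun ℚ (Fin r)).dualBasis := by
    funext i
    apply LinearMap.ext
    intro x
    simp [Module.Basis.dualBasis_apply]
  have hrange : Set.range g = ⇑(V.subtype.dualMap) ''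
      Set.range (fun i => LinearMap.proj (R := ℚ) (φ := fun _ : Fin r => ℚ) i) := by
    rw [← Set.range_comp]
    rfl
  have hspan : Submodule.span ℚ (Set.range g) = ⊤ := by
    rw [hrange, Submodule.span_image]
    rw [hcoord, (Pi.basisFun ℚ (Fin r)).dualBasis.span_eq, Submodule.map_top,
      LinearMap.range_eq_top]
    exact LinearMap.dualMap_surjective_of_injective V.injective_subtype
  obtain ⟨t, hts, htspan, htli⟩ := exists_linearIndependent ℚ (Set.range g)
  rw [hspan] at htspan
  have htfin : t.Finite := htli.setFinite
  haveI : Fintype t := htfin.fintype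
  have hb : Module.Basis t ℚ (Module.Dual ℚ V) := Module.Basis.mk htli (by rw [Subtype.range_coe, htspan])
  have hcard : Fintype.card t = d := by
    rw [← Module.finrank_eq_card_basis hb, Subspace.dual_finrank_eq, hfin]
  have eqv : Fin d ≃ t := (Fintype.equivFinOfCardEq hcard).symm
  -- choose preimage indices
  have hchoice : ∀ x : t, ∃ i : Fin r, g i = (x : Module.Dual ℚ V) := fun x => hts x.2
  choose c hc using hchoice
  set e : Fin d → Fin r := fun j => c (eqv j) with he
  -- injectivity of the projection on V
  set π : V →ₗ[ℚ] (Fin d → ℚ) := LinearMap.pi (fun j => g (e j)) with hπ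
  have hπinj : Function.Injective π := by
    rw [← LinearMap.ker_eq_bot, Submodule.eq_bot_iff]
    intro v hv
    have hv' : ∀ j : Fin d, g (e j) v = 0 := fun j => congrFun hv j
    have ht0 : ∀ φ ∈ t, φ v = 0 := by
      intro φ hφ
      have := hv' (eqv.symm ⟨φ, hφ⟩)
      rwa [hc, Equiv.apply_symm_apply] at this
    have hall : ∀ φ : Module.Dual ℚ V, φ v = 0 := by
      intro φ
      have hle : Submodule.span ℚ t ≤ LinearMap.ker (Module.Dual.eval ℚ V v) := by
        rw [Submodule.span_le]
        intro ψ hψ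
        simpa using ht0 ψ hψ
      have : φ ∈ LinearMap.ker (Module.Dual.eval ℚ V v) := hle (htspan ▸ Submodule.mem_top)
      simpa using this
    exact (Module.forall_dual_apply_eq_zero_iff ℚ v).mp hall
  -- the monoid homomorphism
  set Φ : (Fin r → ℕ) →+ (Fin d → ℕ) :=
    { toFun := fun x => fun j => x (e j)
      map_zero' := rfl
      map_add' := fun _ _ => rfl } with hΦ
  refine ⟨H.map Φ, ?_, ?_⟩
  · -- equivalence
    have hmemV : ∀ x : Fin r → ℕ, x ∈ H → (fun i => (x i : ℚ)) ∈ V := by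
      intro x hx
      exact Submodule.subset_span ⟨x, hx, rfl⟩
    have hΦinj : ∀ x ∈ H, ∀ y ∈ H, Φ x = Φ y → x = y := by
      intro x hx y hy hxy
      have hπeq : π ⟨fun i => (x i : ℚ), hmemV x hx⟩ = π ⟨fun i => (y i : ℚ), hmemV y hy⟩ := by
        funext j
        have : (x (e j) : ℚ) = (y (e j) : ℚ) := by
          exact_mod_cast congrFun hxy j
        simpa [hπ, hg] using this
      have := hπinj hπeq
      have hq : (fun i => (x i : ℚ)) = fun i => (y i : ℚ) := congrArg Subtype.val this
      funext i
      exact_mod_cast congrFun hq i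
    refine ⟨AddEquiv.ofBijective
      ({ toFun := fun x => ⟨Φ x, ⟨x, x.2, rfl⟩⟩
         map_zero' := by ext j; simp
         map_add' := fun a b => by ext j; simp } :
        H →+ (H.map Φ)) ⟨?_, ?_⟩⟩
    · rintro ⟨x, hx⟩ ⟨y, hy⟩ hxy
      exact Subtype.ext (hΦinj x hx y hy (congrArg Subtype.val hxy))
    · rintro ⟨z, x, hx, rfl⟩
      exact ⟨⟨x, hx⟩, rfl⟩
  · -- rank of the image
    set P : (Fin r → ℚ) →ₗ[ℚ] (Fin d → ℚ) := LinearMap.pi (fun j => LinearMap.proj (e j)) with hP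
    have himg : ((fun x : Fin d → ℕ => fun i => (x i : ℚ)) '' (H.map Φ))
        = P '' ((fun x : Fin r → ℕ => fun i => (x i : ℚ)) '' H) := by
      ext z
      constructor
      · rintro ⟨_, ⟨x, hx, rfl⟩, rfl⟩
        exact ⟨fun i => (x i : ℚ), ⟨x, hx, rfl⟩, rfl⟩
      · rintro ⟨_, ⟨x, hx, rfl⟩, rfl⟩
        exact ⟨Φ x, ⟨x, hx, rfl⟩, rfl⟩
    have hcomp : P ∘ₗ V.subtype = π := rfl
    have hmap : Submodule.span ℚ ((fun x : Fin d → ℕ => fun i => (x i : ℚ)) '' (H.map Φ))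
        = Submodule.map P V := by
      rw [himg, Submodule.span_image, hV]
    show Module.finrank ℚ (Submodule.span ℚ
      ((fun x : Fin d → ℕ => fun i => (x i : ℚ)) '' (H.map Φ))) = d
    rw [hmap]
    have : Submodule.map P V = LinearMap.range (P ∘ₗ V.subtype) := by
      rw [LinearMap.range_comp, Submodule.range_subtype]
    rw [this, hcomp]
    rw [LinearMap.finrank_range_of_inj hπinj, hfin]
end

section
/- Let k ≥ 2 and n₁ < n₂ < ... < n_k be positive integers, and let H = ⟨n₁, ..., n_k⟩ ⊆ ℕ. For nonzero x ∈ H define the generalized elasticity ρ_g(x) = max L_g(x) / min L_g(x), where L_g(x) = {c₁ + ... + c_k : cᵢ ∈ ℕ, Σ cᵢnᵢ = x}. Then any limit point of the set {ρ_g(x) : x ∈ H, x ≠ 0} equals n_k/n₁. -/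
/-- The generalized set of lengths of `x` with respect to the distinguished generators
`n 0, …, n (k-1)`. -/
def genLengths {k : ℕ} (n : Fin k → ℕ) (x : ℕ) : Set ℕ :=
  {m | ∃ c : Fin k → ℕ, ∑ i, c i * n i = x ∧ ∑ i, c i = m}

/-- The generalized elasticity of `x` with respect to `n`. -/
noncomputable def genElasticity {k : ℕ} (n : Fin k → ℕ) (x : ℕ) : ℝ :=
  ((sSup (genLengths n x) : ℕ) : ℝ) / ((sInf (genLengths n x) : ℕ) : ℝ)

lemma mem_closure_iff_rep {k : ℕ} (n : Fin k → ℕ) (x : ℕ) :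
    x ∈ AddSubmonoid.closure (Set.range n) ↔ ∃ c : Fin k → ℕ, ∑ i, c i * n i = x := by
  constructor
  · intro hx
    induction hx using AddSubmonoid.closure_induction with
    | mem y hy =>
      obtain ⟨i, rfl⟩ := hy
      refine ⟨Pi.single i 1, ?_⟩
      rw [Finset.sum_eq_single i] <;> simp +contextual [Pi.single_apply]
    | zero => exact ⟨0, by simp⟩
    | add a b _ _ ha hb =>
      obtain ⟨c, hc⟩ := ha; obtain ⟨d, hd⟩ := hb
      exact ⟨c + d, by simp [add_mul, Finset.sum_add_distrib, hc, hd]⟩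
  · rintro ⟨c, rfl⟩
    refine AddSubmonoid.sum_mem _ fun i _ => ?_
    have h := nsmul_mem
      (AddSubmonoid.subset_closure (s := Set.range n) ⟨i, rfl⟩) (c i)
    simpa [smul_eq_mul] using h

lemma exists_rep_small {k : ℕ} (n : Fin k → ℕ) (p : Fin k) (hp : 0 < n p) (c : Fin k → ℕ) :
    ∃ d : Fin k → ℕ, ∑ i, d i * n i = ∑ i, c i * n i ∧ ∀ i, i ≠ p → d i < n p := by
  generalize hm : (∑ i ∈ Finset.univ.erase p, c i) = m
  induction m using Nat.strong_induction_on generalizing c with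
  | _ m ih =>
    by_cases h : ∀ i, i ≠ p → c i < n p
    · exact ⟨c, rfl, h⟩
    · push_neg at h
      obtain ⟨j, hj, hcj⟩ := h
      classical
      set c' : Fin k → ℕ := fun i => if i = p then c p + n j else if i = j then c j - n p else c i
        with hc'
      have hjp : j ∈ Finset.univ.erase p := by simp [hj]
      have hcp' : c' p = c p + n j := by simp [hc']
      have hcj' : c' j = c j - n p := by simp [hc', hj]
      have tail_eq : ∀ i ∈ (Finset.univ.erase p).erase j, c' i = c i := by
        intro i hi
        simp only [Finset.mem_erase] at hi
        simp [hc', hi.1, hi.2.1]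
      have split : ∀ f : Fin k → ℕ,
          ∑ i, f i = f p + (f j + ∑ i ∈ (Finset.univ.erase p).erase j, f i) := by
        intro f
        rw [Finset.add_sum_erase _ f hjp, Finset.add_sum_erase _ f (Finset.mem_univ p)]
      have hval : ∑ i, c' i * n i = ∑ i, c i * n i := by
        rw [split (fun i => c' i * n i), split (fun i => c i * n i)]
        have tail2 : ∑ i ∈ (Finset.univ.erase p).erase j, c' i * n i
            = ∑ i ∈ (Finset.univ.erase p).erase j, c i * n i :=
          Finset.sum_congr rfl fun i hi => by rw [tail_eq i hi]
        rw [tail2, hcp', hcj']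
        zify [hcj]
        ring
      have hless : ∑ i ∈ Finset.univ.erase p, c' i < m := by
        have t3 : ∑ x ∈ (Finset.univ.erase p).erase j, c' x
            = ∑ x ∈ (Finset.univ.erase p).erase j, c x :=
          Finset.sum_congr rfl tail_eq
        rw [← Finset.add_sum_erase _ c' hjp, ← hm, ← Finset.add_sum_erase _ c hjp, t3, hcj']
        omega
      obtain ⟨d, hd1, hd2⟩ := ih _ hless c' rfl
      exact ⟨d, hd1.trans hval, hd2⟩

lemma elasticity_close {k : ℕ} (hk : 2 ≤ k) (n : Fin k → ℕ) (hpos : ∀ i, 0 < n i)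
    (hmono : StrictMono n) :
    ∃ D : ℝ, 0 < D ∧ ∀ x ∈ AddSubmonoid.closure (Set.range n), x ≠ 0 →
      |genElasticity n x - (n ⟨k - 1, Nat.sub_lt (Nat.lt_of_lt_of_le Nat.two_pos hk) Nat.one_pos⟩ : ℝ) / (n ⟨0, Nat.lt_of_lt_of_le Nat.two_pos hk⟩ : ℝ)| ≤ D / x := by
  set p0 : Fin k := ⟨0, by omega⟩ with hp0
  set q : Fin k := ⟨k - 1, by omega⟩ with hq
  have hle : ∀ i : Fin k, n p0 ≤ n i ∧ n i ≤ n q := by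
    intro i
    constructor
    · exact hmono.monotone (by simp [hp0, Fin.le_def])
    · exact hmono.monotone (by simp [hq, Fin.le_def]; omega)
  set B : ℕ := ∑ i : Fin k, n p0 * n i with hB
  set B' : ℕ := ∑ _i : Fin k, n q * n q with hB'
  have hB'pos : 0 < B' := by
    rw [hB']
    refine Finset.sum_pos (fun i _ => Nat.mul_pos (hpos q) (hpos q)) ⟨p0, Finset.mem_univ p0⟩
  refine ⟨((B + B' : ℕ) : ℝ) * (n q : ℝ) / (n p0 : ℝ), ?_, ?_⟩
  · have h1 : (0:ℝ) < ((B + B' : ℕ) : ℝ) := by exact_mod_cast Nat.add_pos_right B hB'pos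
    have h2 : (0:ℝ) < (n q : ℝ) := by exact_mod_cast hpos q
    have h3 : (0:ℝ) < (n p0 : ℝ) := by exact_mod_cast hpos p0
    positivity
  intro x hx hx0
  obtain ⟨c, hc⟩ := (mem_closure_iff_rep n x).mp hx
  -- basic bounds on any length
  have key : ∀ l ∈ genLengths n x, n p0 * l ≤ x ∧ x ≤ n q * l := by
    rintro l ⟨e, hex, hel⟩
    constructor
    · calc n p0 * l = ∑ i, n p0 * e i := by rw [← hel, Finset.mul_sum]
        _ ≤ ∑ i, e i * n i := Finset.sum_le_sum fun i _ => by
            rw [mul_comm]; exact Nat.mul_le_mul_left _ (hle i).1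
        _ = x := hex
    · calc x = ∑ i, e i * n i := hex.symm
        _ ≤ ∑ i, n q * e i := Finset.sum_le_sum fun i _ => by
            rw [mul_comm]; exact mul_le_mul_left (hle i).2 _
        _ = n q * l := by rw [← hel, Finset.mul_sum]
  have hne : (genLengths n x).Nonempty := ⟨∑ i, c i, c, hc, rfl⟩
  have hbdd : BddAbove (genLengths n x) := by
    refine ⟨x, fun l hl => ?_⟩
    have := (key l hl).1
    have h0 : l ≤ n p0 * l := Nat.le_mul_of_pos_left l (hpos p0)
    omega
  set M : ℕ := sSup (genLengths n x) with hMdef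
  set m : ℕ := sInf (genLengths n x) with hmdef
  have hM : M ∈ genLengths n x := Nat.sSup_mem hne hbdd
  have hm : m ∈ genLengths n x := Nat.sInf_mem hne
  have h1 : n p0 * M ≤ x := (key M hM).1
  have h2 : x ≤ n q * m := (key m hm).2
  have hm1 : 1 ≤ m := by
    rcases Nat.eq_zero_or_pos m with h | h
    · exfalso
      obtain ⟨e, hex, hel⟩ := hm
      rw [h] at hel
      have : ∀ i ∈ Finset.univ, e i = 0 := fun i _ => by
        have := Finset.sum_eq_zero_iff.mp hel i (Finset.mem_univ i); exact this
      apply hx0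
      rw [← hex]
      exact Finset.sum_eq_zero fun i hi => by rw [this i hi, zero_mul]
    · exact h
  -- upper representation: big coefficient at p0
  have hxB : x ≤ n p0 * M + B := by
    obtain ⟨d, hd, hds⟩ := exists_rep_small n p0 (hpos p0) c
    rw [hc] at hd
    have hdmem : (∑ i, d i) ∈ genLengths n x := ⟨d, hd, rfl⟩
    have hdM : (∑ i, d i) ≤ M := le_csSup hbdd hdmem
    have step1 : x = d p0 * n p0 + ∑ i ∈ Finset.univ.erase p0, d i * n i := by
      rw [← hd, Finset.add_sum_erase _ (fun i => d i * n i) (Finset.mem_univ p0)]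
    have step2 : ∑ i ∈ Finset.univ.erase p0, d i * n i
        ≤ ∑ i ∈ Finset.univ.erase p0, n p0 * n i := by
      refine Finset.sum_le_sum fun i hi => ?_
      have : d i < n p0 := hds i (Finset.mem_erase.mp hi).1
      exact Nat.mul_le_mul_right _ this.le
    have step3 : ∑ i ∈ Finset.univ.erase p0, n p0 * n i ≤ B :=
      Finset.sum_le_sum_of_subset (Finset.erase_subset _ _)
    have step4 : d p0 * n p0 ≤ n p0 * M := by
      rw [mul_comm]
      refine Nat.mul_le_mul_left _ (le_trans ?_ hdM)
      exact Finset.single_le_sum (fun i _ => Nat.zero_le _) (Finset.mem_univ p0)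
    omega
  -- lower representation: big coefficient at q
  have hmB : n q * m ≤ x + B' := by
    obtain ⟨e, he, hes⟩ := exists_rep_small n q (hpos q) c
    rw [hc] at he
    have hemem : (∑ i, e i) ∈ genLengths n x := ⟨e, he, rfl⟩
    have hem : m ≤ ∑ i, e i := Nat.sInf_le hemem
    have step1 : n q * (∑ i, e i) = n q * e q + ∑ i ∈ Finset.univ.erase q, n q * e i := by
      rw [Finset.mul_sum, Finset.add_sum_erase _ (fun i => n q * e i) (Finset.mem_univ q)]
    have step2 : n q * e q ≤ x := by
      rw [← he, mul_comm]
      exact Finset.single_le_sum (f := fun i => e i * n i) (fun i _ => Nat.zero_le _)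
        (Finset.mem_univ q)
    have step3 : ∑ i ∈ Finset.univ.erase q, n q * e i
        ≤ ∑ i ∈ Finset.univ.erase q, n q * n q := by
      refine Finset.sum_le_sum fun i hi => ?_
      exact Nat.mul_le_mul_left _ (hes i (Finset.mem_erase.mp hi).1).le
    have step4 : ∑ i ∈ Finset.univ.erase q, n q * n q ≤ B' :=
      Finset.sum_le_sum_of_subset (Finset.erase_subset _ _)
    have : n q * m ≤ n q * (∑ i, e i) := Nat.mul_le_mul_left _ hem
    omega
  -- real arithmetic
  have ha : (0:ℝ) < (n p0 : ℝ) := by exact_mod_cast hpos p0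
  have hb : (0:ℝ) < (n q : ℝ) := by exact_mod_cast hpos q
  have hmr : (1:ℝ) ≤ (m:ℝ) := by exact_mod_cast hm1
  have hmpos : (0:ℝ) < (m:ℝ) := by linarith
  have hxr : (0:ℝ) < (x:ℝ) := by exact_mod_cast Nat.pos_of_ne_zero hx0
  have h1c : (n p0 : ℝ) * (M:ℝ) ≤ (x:ℝ) := by exact_mod_cast h1
  have h2c : (x:ℝ) ≤ (n q : ℝ) * (m:ℝ) := by exact_mod_cast h2
  have hxBc : (x:ℝ) ≤ (n p0 : ℝ) * (M:ℝ) + (B:ℝ) := by exact_mod_cast hxB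
  have hmBc : (n q : ℝ) * (m:ℝ) ≤ (x:ℝ) + (B':ℝ) := by exact_mod_cast hmB
  have hρ : genElasticity n x = (M:ℝ) / (m:ℝ) := by
    rw [genElasticity, ← hMdef, ← hmdef]
  rw [hρ, Nat.cast_add]
  have hub : (M:ℝ) / (m:ℝ) ≤ (n q : ℝ) / (n p0 : ℝ) := by
    rw [div_le_div_iff₀ hmpos ha]
    nlinarith
  rw [abs_sub_le_iff]
  constructor
  · have hD : (0:ℝ) ≤ ((B:ℝ) + (B':ℝ)) * (n q : ℝ) / (n p0 : ℝ) / (x:ℝ) := by positivity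
    linarith
  · rw [div_sub_div _ _ (ne_of_gt ha) (ne_of_gt hmpos),
      div_le_div_iff₀ (mul_pos ha hmpos) hxr]
    have e : ((B:ℝ) + (B':ℝ)) * (n q:ℝ) / (n p0:ℝ) * ((n p0:ℝ) * (m:ℝ))
        = ((B:ℝ) + (B':ℝ)) * ((n q:ℝ) * (m:ℝ)) := by
      field_simp
    rw [e]
    have h0 : (0:ℝ) ≤ (n q:ℝ) * (m:ℝ) - (x:ℝ) := by linarith
    have h0' : (0:ℝ) ≤ (n q:ℝ) * (m:ℝ) - (n p0:ℝ) * (M:ℝ) := by linarith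
    have h1' : (0:ℝ) ≤ (B:ℝ) + (B':ℝ) - ((n q:ℝ) * (m:ℝ) - (n p0:ℝ) * (M:ℝ)) := by linarith
    have h2' : (0:ℝ) ≤ (n q:ℝ) * (m:ℝ) := by positivity
    nlinarith [mul_nonneg h0' h0, mul_nonneg h1' h2']

/-- Any limit point of the set of generalized elasticities of nonzero elements of
`H = ⟨n₁, …, n_k⟩` equals `n_k / n₁`. -/
theorem stmt9 (k : ℕ) (hk : 2 ≤ k) (n : Fin k → ℕ) (hpos : ∀ i, 0 < n i)
    (hmono : StrictMono n) :
    ∀ L : ℝ, AccPt L (Filter.principal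
        {ρ : ℝ | ∃ x ∈ AddSubmonoid.closure (Set.range n), x ≠ 0 ∧ genElasticity n x = ρ}) →
      L = (n ⟨k - 1, by omega⟩ : ℝ) / (n ⟨0, by omega⟩ : ℝ) := by
  intro L hL
  by_contra hLT
  set T : ℝ := (n ⟨k - 1, by omega⟩ : ℝ) / (n ⟨0, by omega⟩ : ℝ) with hT
  obtain ⟨D, hD, hclose⟩ := elasticity_close hk n hpos hmono
  set δ : ℝ := |L - T| / 2 with hδ
  have hδpos : 0 < δ := by
    have h1 : L - T ≠ 0 := sub_ne_zero.mpr hLT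
    have h2 := abs_pos.mpr h1
    rw [hδ]; linarith
  obtain ⟨N, hN⟩ := exists_nat_gt (D / δ)
  have hfar : ∀ x ∈ AddSubmonoid.closure (Set.range n), x ≠ 0 → N ≤ x →
      δ ≤ |genElasticity n x - L| := by
    intro x hx hx0 hxN
    have h1 : |genElasticity n x - T| ≤ D / x := hclose x hx hx0
    have hxpos : (0:ℝ) < x := by exact_mod_cast Nat.pos_of_ne_zero hx0
    have hNx : (N:ℝ) ≤ x := by exact_mod_cast hxN
    have h2 : D / x < δ := by
      rw [div_lt_iff₀ hxpos]
      have h3 : D / δ < (x:ℝ) := lt_of_lt_of_le hN hNx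
      rw [div_lt_iff₀ hδpos] at h3
      nlinarith
    have h4 := abs_sub_le L (genElasticity n x) T
    have h5 : |L - genElasticity n x| = |genElasticity n x - L| := abs_sub_comm _ _
    rw [hδ]
    linarith [h4, h5, h1, h2]
  set E : Set ℝ := (genElasticity n '' (Set.Iio N)) \ {L} with hE
  have hEfin : E.Finite := ((Set.finite_Iio N).image _).diff
  have hEclosed : IsClosed E := hEfin.isClosed
  have hLnotE : L ∉ E := fun h => h.2 rfl
  have hmem : Eᶜ ∈ nhds L := hEclosed.isOpen_compl.mem_nhds hLnotE
  obtain ⟨ε, hεpos, hball⟩ := Metric.mem_nhds_iff.mp hmem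
  rw [accPt_iff_nhds] at hL
  obtain ⟨y, ⟨hyU, hyS⟩, hyL⟩ :=
    hL (Metric.ball L (min ε δ)) (Metric.ball_mem_nhds L (by positivity))
  obtain ⟨x, hx, hx0, rfl⟩ := hyS
  have hdist : |genElasticity n x - L| < min ε δ := by
    have h := Metric.mem_ball.mp hyU; rwa [Real.dist_eq] at h
  have hxN : x < N := by
    by_contra hge
    push_neg at hge
    have h1 := hfar x hx hx0 hge
    have h2 := (lt_min_iff.mp hdist).2
    linarith
  have hyE : genElasticity n x ∈ E := ⟨⟨x, hxN, rfl⟩, hyL⟩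
  exact hball (Metric.ball_subset_ball (min_le_left ε δ) hyU) hyE
end
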